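/- Let g be a ground truth and p, q predictions of length n, and let α, β be as specified. Suppose N ∈ I_0(g), p(i) = q(i) for all i ∉ N, |p^{-1}(1)| = |q^{-1}(1)|, and |I_1(p_N)| = |I_1(q_N)|. Then LARM(g,p) = LARM(g,q). (LARM satisfies the Invariance under Permutation of False Positives property.) -/
import Mathlib


namespace TSAD

open Finset

/-- The index domain `{1, …, n}`. -/
def dom (n : ℕ) : Finset ℕ := Finset.Icc 1 n

/-- The interval `[l, u]` represented by a pair. -/
def ivl (W : ℕ × ℕ) : Finset ℕ := Finset.Icc W.1 W.2

/-- The positions in `A` where the binary sequence `s` takes the value `1` (`true`). -/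
def ones (A : Finset ℕ) (s : ℕ → Bool) : Finset ℕ := A.filter (fun i => s i = true)

/-- `runs A s v` is the set of maximal intervals `[l, u] ⊆ A` on which `s` is constantly `v`
(maximal among intervals contained in `A`).  For `A = dom n` this is `I_v(s)`;
for `A ⊆ dom n` it is `I_v(s_A)`. -/
def runs (A : Finset ℕ) (s : ℕ → Bool) (v : Bool) : Finset (ℕ × ℕ) :=
  (A ×ˢ A).filter (fun W =>
    W.1 ≤ W.2 ∧ ivl W ⊆ A ∧ (∀ i ∈ ivl W, s i = v) ∧
    (W.1 - 1 ∈ A → s (W.1 - 1) ≠ v) ∧ (W.2 + 1 ∈ A → s (W.2 + 1) ≠ v))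

/-- Specification of the function `α` used in the (A)LARM scores: it assigns to each
restriction `p_A` a value in `[0,1)`, depends only on the restriction, strictly increases
when a single `0` of `p_A` is changed to a `1`, satisfies alarm timing, and early bias. -/
structure AlphaSpec (α : Finset ℕ → (ℕ → Bool) → ℝ) : Prop where
  mem_Ico : ∀ A p, α A p ∈ Set.Ico (0 : ℝ) 1
  restrict : ∀ A (p q : ℕ → Bool), (∀ i ∈ A, p i = q i) → α A p = α A q
  mono : ∀ A (p q : ℕ → Bool) (i : ℕ), i ∈ A → p i = true → q i = false →
    (∀ j, j ≠ i → p j = q j) → α A q < α A p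
  timing : ∀ A (p q : ℕ → Bool), (ones A p).card = (ones A q).card →
    ∀ (hp : (ones A p).Nonempty) (hq : (ones A q).Nonempty),
      (ones A p).min' hp < (ones A q).min' hq → α A q < α A p
  earlyBias : ∀ A (p q : ℕ → Bool) (i j : ℕ), i ∈ A → j ∈ A → i < j →
    p i = true → p j = false → q i = false → q j = true →
    (∀ k, k ≠ i → k ≠ j → p k = q k) → α A q < α A p

/-- Specification of the function `β` used in the (A)LARM scores: strictly increasing
with values in `[0,1]`. -/
structure BetaSpec (β : ℕ → ℝ) : Prop where
  mem_Icc : ∀ k, β k ∈ Set.Icc (0 : ℝ) 1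
  strictMono : StrictMono β

/-- The LARM score. -/
noncomputable def LARM (n : ℕ) (α : Finset ℕ → (ℕ → Bool) → ℝ) (β : ℕ → ℝ)
    (g p : ℕ → Bool) : ℝ :=
  (1 / ((runs (dom n) g true).card : ℝ)) *
    ∑ A ∈ (runs (dom n) g true).filter (fun A => 0 < (runs (ivl A) p true).card),
      (α (ivl A) p + 1) / 2 ^ ((runs (ivl A) p true).card)
  - 2 * ∑ N ∈ runs (dom n) g false, ((runs (ivl N) p true).card : ℝ)
  - ∑ N ∈ runs (dom n) g false, β ((ones (ivl N) p).card)

/-- `I_{01}(g)`: intervals that are a maximal `0`-run immediately followed by a maximal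
`1`-run. -/
def runs01 (n : ℕ) (g : ℕ → Bool) : Finset (ℕ × ℕ) :=
  ((dom n) ×ˢ (dom n)).filter (fun W =>
    ∃ b ∈ Finset.Ico W.1 W.2,
      (W.1, b) ∈ runs (dom n) g false ∧ (b + 1, W.2) ∈ runs (dom n) g true)

/-- `I_{10}(g)`: intervals that are a maximal `1`-run immediately followed by a maximal
`0`-run. -/
def runs10 (n : ℕ) (g : ℕ → Bool) : Finset (ℕ × ℕ) :=
  ((dom n) ×ˢ (dom n)).filter (fun W =>
    ∃ b ∈ Finset.Ico W.1 W.2,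
      (W.1, b) ∈ runs (dom n) g true ∧ (b + 1, W.2) ∈ runs (dom n) g false)

/-- Early alarms `EA(p,g)`. -/
def EA (n : ℕ) (p g : ℕ → Bool) : Finset (ℕ × ℕ) :=
  ((dom n) ×ˢ (dom n)).filter (fun A =>
    (∃ I ∈ runs01 n g, A ∈ runs (ivl I) p true) ∧
    (∃ i ∈ ivl A, g i = true) ∧ (∃ i ∈ ivl A, g i = false))

/-- Late alarms `LA(p,g)`. -/
def LA (n : ℕ) (p g : ℕ → Bool) : Finset (ℕ × ℕ) :=
  ((dom n) ×ˢ (dom n)).filter (fun A =>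
    (∃ I ∈ runs10 n g, A ∈ runs (ivl I) p true) ∧
    (∃ i ∈ ivl A, g i = true) ∧ (∃ i ∈ ivl A, g i = false))

/-- True false alarms `TA(p,g)`. -/
def TA (n : ℕ) (p g : ℕ → Bool) : Finset (ℕ × ℕ) :=
  (runs (dom n) p true).filter (fun A =>
    (∀ i ∈ ivl A, g i = false) ∧
    ∀ B ∈ EA n p g ∪ LA n p g, ¬ ivl A ⊆ ivl B)

/-- Detected anomalies `DA(p,g)`. -/
def DA (n : ℕ) (p g : ℕ → Bool) : Finset (ℕ × ℕ) :=
  (runs (dom n) g true).filter (fun A =>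
    ∃ B ∈ runs (dom n) p true,
      (ivl B ∩ ivl A).Nonempty ∧
      (B.1 ∈ ivl A ∨ ∀ i ∈ Finset.Ico B.1 A.1, g i = false))

/-- The ALARM score with alarm tolerance `t` (the averaged term is `0` when
`DA(p,g) = ∅`, since in Lean `0 / 0 = 0`). -/
noncomputable def ALARM (n t : ℕ) (α : Finset ℕ → (ℕ → Bool) → ℝ) (β : ℕ → ℝ)
    (g p : ℕ → Bool) : ℝ :=
  ((DA n p g).card : ℝ)
  + (∑ A ∈ DA n p g, (α (ivl A) p + 1) / 2 ^ ((runs (ivl A) p true).card)) /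
      ((DA n p g).card : ℝ)
  - β (((dom n).filter (fun i => p i = true ∧ g i = false)).card)
  - (1 / (t : ℝ)) * (((TA n p g).card : ℝ) + (3 / 2) * ((EA n p g).card : ℝ)
      + (1 / 2) * ((LA n p g).card : ℝ))

/-- Point-wise Recall. -/
noncomputable def recallPW (n : ℕ) (g p : ℕ → Bool) : ℝ :=
  (((dom n).filter (fun i => p i = true ∧ g i = true)).card : ℝ) /
    ((ones (dom n) g).card : ℝ)

/-- Point-wise F1-score. -/
noncomputable def f1PW (n : ℕ) (g p : ℕ → Bool) : ℝ :=
  2 * (((dom n).filter (fun i => p i = true ∧ g i = true)).card : ℝ) /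
    (((ones (dom n) p).card : ℝ) + ((ones (dom n) g).card : ℝ))

/-- Total length of the ground-truth anomaly windows hit by `p`. -/
def Spa (n : ℕ) (g p : ℕ → Bool) : ℕ :=
  ∑ W ∈ (runs (dom n) g true).filter (fun W => ∃ i ∈ ivl W, p i = true), (ivl W).card

/-- Point-adjusted Recall. -/
noncomputable def recallPA (n : ℕ) (g p : ℕ → Bool) : ℝ :=
  ((Spa n g p : ℝ)) / ((ones (dom n) g).card : ℝ)

/-- Point-adjusted F1-score. -/
noncomputable def f1PA (n : ℕ) (g p : ℕ → Bool) : ℝ :=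
  2 * (Spa n g p : ℝ) /
    ((Spa n g p : ℝ) + (((dom n).filter (fun i => p i = true ∧ g i = false)).card : ℝ)
      + ((ones (dom n) g).card : ℝ))

/-- Point-wise Precision. -/
noncomputable def precisionPW (n : ℕ) (g p : ℕ → Bool) : ℝ :=
  (((dom n).filter (fun i => p i = true ∧ g i = true)).card : ℝ) /
    ((ones (dom n) p).card : ℝ)

/-- Event-wise Recall. -/
noncomputable def recallEvent (n : ℕ) (g p : ℕ → Bool) : ℝ :=
  (((runs (dom n) g true).filter (fun W => ∃ i ∈ ivl W, p i = true)).card : ℝ) /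
    ((runs (dom n) g true).card : ℝ)

/-- Composite F1-score. -/
noncomputable def Fc1 (n : ℕ) (g p : ℕ → Bool) : ℝ :=
  2 * precisionPW n g p * recallEvent n g p / (precisionPW n g p + recallEvent n g p)

/-- Distance from `i` to the closest element of `S`. -/
noncomputable def minDist (i : ℕ) (S : Finset ℕ) : ℕ :=
  sInf {d : ℕ | ∃ j ∈ S, d = ((i : ℤ) - (j : ℤ)).natAbs}

/-- Temporal Distance. -/
noncomputable def TD (n : ℕ) (g p : ℕ → Bool) : ℕ :=
  ∑ i ∈ ones (dom n) g, minDist i (ones (dom n) p)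
  + ∑ i ∈ ones (dom n) p, minDist i (ones (dom n) g)

/-- The set of ground-truth anomaly windows hit by `p`. -/
def Dset (n : ℕ) (g p : ℕ → Bool) : Finset (ℕ × ℕ) :=
  (runs (dom n) g true).filter (fun W => ∃ i ∈ ivl W, p i = true)

/-- Delay of the first alarm of `p` within the window `W`. -/
noncomputable def delay (p : ℕ → Bool) (W : ℕ × ℕ) : ℕ :=
  sInf {i : ℕ | i ∈ ivl W ∧ p i = true} - W.1

/-- Average Alert Delay. -/
noncomputable def AAD (n : ℕ) (g p : ℕ → Bool) : ℝ :=
  (∑ W ∈ Dset n g p, (delay p W : ℝ)) / ((Dset n g p).card : ℝ)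



lemma runs_congr (B : Finset ℕ) (p q : ℕ → Bool) (v : Bool)
    (h : ∀ i ∈ B, p i = q i) : runs B p v = runs B q v := by
  unfold runs
  apply Finset.filter_congr
  intro W _
  constructor <;> rintro ⟨h1, h2, h3, h4, h5⟩ <;>
    refine ⟨h1, h2, fun i hi => ?_, fun hm => ?_, fun hm => ?_⟩
  · rw [← h i (h2 hi)]; exact h3 i hi
  · rw [← h _ hm]; exact h4 hm
  · rw [← h _ hm]; exact h5 hm
  · rw [h i (h2 hi)]; exact h3 i hi
  · rw [h _ hm]; exact h4 hm
  · rw [h _ hm]; exact h5 hm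

lemma ones_congr (B : Finset ℕ) (p q : ℕ → Bool)
    (h : ∀ i ∈ B, p i = q i) : ones B p = ones B q := by
  unfold ones
  apply Finset.filter_congr
  intro i hi
  rw [h i hi]

lemma runs_eq_of_mem_inter {B : Finset ℕ} {s : ℕ → Bool} {v : Bool} {W W' : ℕ × ℕ}
    (hW : W ∈ runs B s v) (hW' : W' ∈ runs B s v) {i : ℕ}
    (hi : i ∈ ivl W) (hi' : i ∈ ivl W') : W = W' := by
  obtain ⟨_, h1, h2, h3, h4, h5⟩ := Finset.mem_filter.mp hW
  obtain ⟨_, h1', h2', h3', h4', h5'⟩ := Finset.mem_filter.mp hW'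
  simp only [ivl, Finset.mem_Icc] at hi hi'
  have hl : W.1 = W'.1 := by
    by_contra hne
    rcases Nat.lt_or_ge W.1 W'.1 with hlt | hge
    · have hm : W'.1 - 1 ∈ ivl W := by simp only [ivl, Finset.mem_Icc]; omega
      exact h4' (h2 hm) (h3 _ hm)
    · have hlt : W'.1 < W.1 := by omega
      have hm : W.1 - 1 ∈ ivl W' := by simp only [ivl, Finset.mem_Icc]; omega
      exact h4 (h2' hm) (h3' _ hm)
  have hu : W.2 = W'.2 := by
    by_contra hne
    rcases Nat.lt_or_ge W.2 W'.2 with hlt | hge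
    · have hm : W.2 + 1 ∈ ivl W' := by simp only [ivl, Finset.mem_Icc]; omega
      exact h5 (h2' hm) (h3' _ hm)
    · have hlt : W'.2 < W.2 := by omega
      have hm : W'.2 + 1 ∈ ivl W := by simp only [ivl, Finset.mem_Icc]; omega
      exact h5' (h2 hm) (h3 _ hm)
  exact Prod.ext hl hu

/-- LARM satisfies the Invariance under Permutation of False Positives property
(Property 5). -/
theorem larm_permutation_invariance (n : ℕ) (hn : 1 ≤ n)
    (α : Finset ℕ → (ℕ → Bool) → ℝ) (β : ℕ → ℝ)
    (hα : AlphaSpec α) (hβ : BetaSpec β)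
    (g p q : ℕ → Bool) (N : ℕ × ℕ) (hN : N ∈ runs (dom n) g false)
    (hpq : ∀ i ∈ dom n, i ∉ ivl N → p i = q i)
    (hones : (ones (dom n) p).card = (ones (dom n) q).card)
    (hcard : (runs (ivl N) p true).card = (runs (ivl N) q true).card) :
    LARM n α β g p = LARM n α β g q := by
  obtain ⟨-, -, hNsub, hNval, -, -⟩ := Finset.mem_filter.mp hN
  -- p = q on any true-run interval
  have hA : ∀ A ∈ runs (dom n) g true, ∀ i ∈ ivl A, p i = q i := by
    intro A hA' i hi
    obtain ⟨-, -, hsub, hval, -, -⟩ := Finset.mem_filter.mp hA'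
    refine hpq i (hsub hi) fun hiN => ?_
    have := hNval i hiN
    have := hval i hi
    simp_all
  -- p = q on any other false-run interval
  have hB : ∀ N' ∈ runs (dom n) g false, N' ≠ N → ∀ i ∈ ivl N', p i = q i := by
    intro N' hN' hne i hi
    obtain ⟨-, -, hsub, -, -, -⟩ := Finset.mem_filter.mp hN'
    exact hpq i (hsub hi) fun hiN => hne (runs_eq_of_mem_inter hN' hN hi hiN)
  -- counting ones on ivl N
  have hsplit : ∀ r : ℕ → Bool,
      (ones (dom n) r).card = (ones (ivl N) r).card + (ones (dom n \ ivl N) r).card := by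
    intro r
    unfold ones
    rw [← Finset.card_union_of_disjoint
        (Finset.disjoint_filter_filter Finset.disjoint_sdiff),
      ← Finset.filter_union, Finset.union_sdiff_of_subset hNsub]
  have hout : ones (dom n \ ivl N) p = ones (dom n \ ivl N) q := by
    apply ones_congr
    intro i hi
    rw [Finset.mem_sdiff] at hi
    exact hpq i hi.1 hi.2
  have honesN : (ones (ivl N) p).card = (ones (ivl N) q).card := by
    have h1 := hsplit p
    have h2 := hsplit q
    rw [hout] at h1
    omega
  unfold LARM
  congr 1
  congr 1
  · -- first sum
    congr 1
    have hft : ∀ A ∈ runs (dom n) g true,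
        runs (ivl A) p true = runs (ivl A) q true :=
      fun A hA' => runs_congr _ _ _ _ (hA A hA')
    rw [Finset.sum_congr (Finset.filter_congr fun A hA' => by rw [hft A hA'])
      (fun A hA' => ?_)]
    have hA'' := (Finset.mem_filter.mp hA').1
    rw [hft A hA'', hα.restrict (ivl A) p q (hA A hA'')]
  · -- middle sum
    congr 1
    apply Finset.sum_congr rfl
    intro N' hN'
    by_cases hne : N' = N
    · subst hne; exact congrArg Nat.cast hcard
    · rw [runs_congr _ _ _ _ (hB N' hN' hne)]
  · -- beta sum
    apply Finset.sum_congr rfl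
    intro N' hN'
    by_cases hne : N' = N
    · subst hne; rw [honesN]
    · rw [ones_congr _ _ _ (hB N' hN' hne)]


end TSAD
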